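/- Fix θ > 0, t > 0, α ∈ (1/2, 1), and let π(ds) = p(s) ds be a Borel measure on (0,∞) with density p satisfying p(s) s^{1+α} → c for some constant c > 0 as s ↓ 0, and ∫_{(0,∞)} s π(ds) < ∞. Let ψ(λ) = ∫_{(0,∞)} (1 − e^{−λs}) π(ds) (drift β = 0). Then for every integer m ≥ 0, the sequence b_k(m) := a_{k,m}^{(θ)} e^{−t ψ(λ_k)} (k ≥ m) is eventually strictly decreasing in k and converges to 0 as k → ∞; in particular B_m := inf{ i ≥ 0 : b_{i+m+1}(m) < b_{i+m}(m) } is finite. -/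

import Mathlib

open MeasureTheory Filter

/-!
The coefficients grow at most geometrically in `k`: `a_{k+1,m} ≤ 4 a_{k,m}` for large `k`.
The exponents, on the other hand, separate: restricting the integral defining
`ψ(λ_{k+1}) - ψ(λ_k)` to `s ≤ 1/λ_k`, where `p(s) ≳ s^{-(1+α)}`, bounds it below by a
multiple of `(λ_{k+1} - λ_k) λ_k^{α-1} ≍ k^{2α-1}`, which diverges because `α > 1/2`.
Hence `b_{k+1}(m) / b_k(m) → 0`, so `b_·(m)` is eventually strictly decreasing and decays
geometrically.
-/

/-- Pochhammer (rising factorial) symbol `(a)_r = Γ(a+r)/Γ(a)`. -/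
noncomputable def poch (a r : ℝ) : ℝ := Real.Gamma (a + r) / Real.Gamma a

/-- `λ_n = n (n + θ − 1)/2`. -/
noncomputable def lamWF (θ : ℝ) (n : ℕ) : ℝ := n * (n + θ - 1) / 2

/-- `a_{j,m}^{(θ)} = (2j+θ−1)(m+θ)_{(j−1)} / (m!(j−m)!)`. -/
noncomputable def acoef (θ : ℝ) (j m : ℕ) : ℝ :=
  (2 * j + θ - 1) * poch (m + θ) ((j : ℝ) - 1) /
    ((m.factorial : ℝ) * ((j - m).factorial : ℝ))

theorem strictAntiOn_Ici_and_tendsto_zero_of_ratio {f g : ℕ → ℝ}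
    (hg : Tendsto g atTop (nhds 0)) (hpos : ∀ᶠ k in atTop, 0 < f k)
    (hstep : ∀ᶠ k in atTop, f (k + 1) ≤ g k * f k) :
    (∃ N, StrictAntiOn f (Set.Ici N)) ∧ Tendsto f atTop (nhds 0) := by
  have hhalf :
      ∀ᶠ k in atTop, 0 < f (k + 1) ∧ f (k + 1) ≤ 1 / 2 * f k ∧ 1 / 2 * f k < f k := by
    filter_upwards [hpos, (tendsto_add_atTop_nat 1).eventually hpos, hstep,
      hg.eventually (eventually_le_nhds (by norm_num : (0:ℝ) < 1 / 2))]
      with k hk hk1 hk' hgk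
    exact ⟨hk1, hk'.trans (mul_le_mul_of_nonneg_right hgk hk.le), by linarith⟩
  obtain ⟨N, hN⟩ := eventually_atTop.mp hhalf
  refine ⟨⟨N, strictAntiOn_Ici_of_lt_pred fun k hk => ?_⟩, ?_⟩
  · obtain ⟨j, rfl⟩ := Nat.exists_eq_add_of_lt hk
    obtain ⟨-, hj, hj'⟩ := hN (N + j) (by omega)
    simpa only [Order.pred_eq_sub_one, Nat.add_sub_cancel] using hj.trans_lt hj'
  · refine (summable_of_ratio_norm_eventually_le (r := 1 / 2) (by norm_num) ?_).tendsto_atTop_zero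
    filter_upwards [hhalf] with k hk
    rw [Real.norm_of_nonneg hk.1.le, Real.norm_of_nonneg (by linarith)]
    exact hk.2.1

theorem poch_add_one {a r : ℝ} (h : a + r ≠ 0) : poch a (r + 1) = (a + r) * poch a r := by
  rw [poch, poch, ← add_assoc, Real.Gamma_add_one h, mul_div_assoc]

theorem poch_pos {a r : ℝ} (ha : 0 < a) (har : 0 < a + r) : 0 < poch a r :=
  div_pos (Real.Gamma_pos_of_pos har) (Real.Gamma_pos_of_pos ha)

theorem acoef_pos {θ : ℝ} (hθ : 0 < θ) {k : ℕ} (hk : 1 ≤ k) (m : ℕ) :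
    0 < acoef θ k m := by
  have hk' : (1:ℝ) ≤ k := by exact_mod_cast hk
  have h2k : 0 < 2 * (k:ℝ) + θ - 1 := by linarith
  have hpoch := poch_pos (a := m + θ) (r := (k:ℝ) - 1) (by positivity) (by positivity)
  unfold acoef
  positivity

theorem acoef_succ_mul {θ : ℝ} (hθ : 0 < θ) {k m : ℕ} (hk : 1 ≤ k) (hmk : m ≤ k) :
    acoef θ (k + 1) m * ((2 * k + θ - 1) * (k + 1 - m)) =
      (2 * k + θ + 1) * (m + θ + k - 1) * acoef θ k m := by
  have hk' : (1:ℝ) ≤ k := by exact_mod_cast hk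
  have hpoch : poch (m + θ) (((k + 1 : ℕ) : ℝ) - 1) =
      (m + θ + k - 1) * poch (m + θ) ((k : ℝ) - 1) := by
    rw [show ((k + 1 : ℕ) : ℝ) - 1 = ((k : ℝ) - 1) + 1 by push_cast; ring,
      poch_add_one (by positivity)]
    ring_nf
  have hfact : ((k + 1 - m).factorial : ℝ) = (k + 1 - m) * (k - m).factorial := by
    rw [show k + 1 - m = (k - m) + 1 by omega, Nat.factorial_succ]
    push_cast [Nat.cast_sub hmk]
    ring
  have hkm : (0:ℝ) < k + 1 - m := by
    have : (m:ℝ) ≤ k := by exact_mod_cast hmk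
    linarith
  unfold acoef
  rw [hpoch, hfact]
  field_simp
  push_cast
  ring

theorem acoef_succ_le {θ : ℝ} (hθ : 0 < θ) {k m : ℕ} (hk : 3 * (m : ℝ) + θ + 3 ≤ k) :
    acoef θ (k + 1) m ≤ 4 * acoef θ k m := by
  have hm : (0:ℝ) ≤ m := m.cast_nonneg
  have hk1 : 1 ≤ k := by exact_mod_cast (show (1:ℝ) ≤ k by linarith)
  have hmk : m ≤ k := by exact_mod_cast (show (m:ℝ) ≤ k by linarith)
  have hD : 0 < (2 * k + θ - 1) * (k + 1 - m : ℝ) := by nlinarith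
  have hrec := acoef_succ_mul hθ hk1 hmk
  have hpos := acoef_pos hθ hk1 m
  refine le_of_mul_le_mul_right ?_ hD
  have hpoly :
      (2 * k + θ + 1) * (m + θ + k - 1 : ℝ) ≤ 4 * ((2 * k + θ - 1) * (k + 1 - m)) := by
    nlinarith
  calc acoef θ (k + 1) m * ((2 * k + θ - 1) * (k + 1 - m))
      = (2 * k + θ + 1) * (m + θ + k - 1) * acoef θ k m := hrec
    _ ≤ 4 * ((2 * k + θ - 1) * (k + 1 - m)) * acoef θ k m :=
        mul_le_mul_of_nonneg_right hpoly hpos.le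
    _ = 4 * acoef θ k m * ((2 * k + θ - 1) * (k + 1 - m)) := by ring

theorem acoef_mul_exp_succ_le {θ t : ℝ} (hθ : 0 < θ) (u : ℕ → ℝ) {k m : ℕ}
    (hk : 3 * (m : ℝ) + θ + 3 ≤ k) :
    acoef θ (k + 1) m * Real.exp (-t * u (k + 1)) ≤
      4 * Real.exp (-(t * (u (k + 1) - u k))) * (acoef θ k m * Real.exp (-t * u k)) := by
  have hexp :
      Real.exp (-t * u (k + 1)) = Real.exp (-(t * (u (k + 1) - u k))) * Real.exp (-t * u k) := by
    rw [← Real.exp_add]; ring_nf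
  rw [hexp]
  calc acoef θ (k + 1) m * (Real.exp (-(t * (u (k + 1) - u k))) * Real.exp (-t * u k))
      ≤ 4 * acoef θ k m * (Real.exp (-(t * (u (k + 1) - u k))) * Real.exp (-t * u k)) :=
        mul_le_mul_of_nonneg_right (acoef_succ_le hθ hk) (by positivity)
    _ = _ := by ring

noncomputable def laplaceExponent (p : ℝ → ℝ) (l : ℝ) : ℝ :=
  ∫ s in Set.Ioi 0, (1 - Real.exp (-l * s)) * p s

theorem exp_neg_mul_sub_le_exp_neg_sub_exp_neg (x y : ℝ) :
    Real.exp (-y) * (y - x) ≤ Real.exp (-x) - Real.exp (-y) := by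
  have h := Real.add_one_le_exp (y - x)
  have : Real.exp (-x) = Real.exp (-y) * Real.exp (y - x) := by rw [← Real.exp_add]; ring_nf
  rw [this]
  nlinarith [Real.exp_pos (-y)]

section LaplaceExponent

variable {p : ℝ → ℝ}

theorem integrableOn_one_sub_exp_mul (hp0 : ∀ s, 0 ≤ p s) (hpmeas : Measurable p)
    (hmom : IntegrableOn (fun s => s * p s) (Set.Ioi 0)) {l : ℝ} (hl : 0 ≤ l) :
    IntegrableOn (fun s => (1 - Real.exp (-l * s)) * p s) (Set.Ioi 0) := by
  refine Integrable.mono' (hmom.const_mul l)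
    ((measurable_const.sub (measurable_const.mul measurable_id).exp).mul
      hpmeas).aestronglyMeasurable ?_
  filter_upwards [ae_restrict_mem measurableSet_Ioi] with s (hs : 0 < s)
  have hexp : Real.exp (-l * s) ≤ 1 := Real.exp_le_one_iff.mpr (by nlinarith)
  have hlin : 1 - Real.exp (-l * s) ≤ l * s := by
    linarith [Real.add_one_le_exp (-l * s)]
  rw [Real.norm_of_nonneg (mul_nonneg (by linarith) (hp0 s)), ← mul_assoc]
  exact mul_le_mul_of_nonneg_right hlin (hp0 s)

theorem laplaceExponent_sub (hp0 : ∀ s, 0 ≤ p s) (hpmeas : Measurable p)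
    (hmom : IntegrableOn (fun s => s * p s) (Set.Ioi 0)) {l₁ l₂ : ℝ}
    (h₁ : 0 ≤ l₁) (h₂ : 0 ≤ l₂) :
    laplaceExponent p l₂ - laplaceExponent p l₁ =
      ∫ s in Set.Ioi 0, (Real.exp (-l₁ * s) - Real.exp (-l₂ * s)) * p s := by
  rw [laplaceExponent, laplaceExponent, ← integral_sub
    (integrableOn_one_sub_exp_mul hp0 hpmeas hmom h₂)
    (integrableOn_one_sub_exp_mul hp0 hpmeas hmom h₁)]
  congr 1 with s
  ring

theorem laplaceExponent_add_sub_ge (hp0 : ∀ s, 0 ≤ p s) (hpmeas : Measurable p)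
    (hmom : IntegrableOn (fun s => s * p s) (Set.Ioi 0)) {α κ δ l d : ℝ} (hα : 0 ≤ α)
    (hκ : ∀ s ∈ Set.Ioo 0 δ, κ ≤ p s * s ^ (1 + α))
    (hl : 0 < l) (hd : 0 ≤ d) (hdl : d ≤ l) (hlδ : 1 / l < δ) :
    Real.exp (-2) * κ * d * l ^ (α - 1) ≤ laplaceExponent p (l + d) - laplaceExponent p l := by
  set g := fun s => (Real.exp (-l * s) - Real.exp (-(l + d) * s)) * p s
  have hg_nonneg : ∀ s ∈ Set.Ioi (0:ℝ), 0 ≤ g s := fun s (hs : 0 < s) =>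
    mul_nonneg (sub_nonneg.mpr (Real.exp_le_exp.mpr (by nlinarith))) (hp0 s)
  have hg_int : IntegrableOn g (Set.Ioi 0) := by
    refine ((integrableOn_one_sub_exp_mul hp0 hpmeas hmom (l := l + d) (by linarith)).sub
      (integrableOn_one_sub_exp_mul hp0 hpmeas hmom hl.le)).congr_fun (fun s _ => ?_)
      measurableSet_Ioi
    simp only [g, Pi.sub_apply]
    ring
  have hsub : Set.Ioc 0 (1 / l) ⊆ Set.Ioi 0 := Set.Ioc_subset_Ioi_self
  -- For `s ≤ 1 / l` the exponential factor is at least `e⁻² d s` and `s p s ≥ κ l ^ α`.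
  have hg_ge : ∀ s ∈ Set.Ioc 0 (1 / l), Real.exp (-2) * d * (κ * l ^ α) ≤ g s := by
    intro s ⟨hs, hsl⟩
    have hls : l * s ≤ 1 := by rwa [le_div_iff₀ hl, mul_comm] at hsl
    have hsp : κ * l ^ α ≤ s * p s := by
      have hdens := hκ s ⟨hs, hsl.trans_lt hlδ⟩
      rw [Real.rpow_one_add' hs.le (by linarith)] at hdens
      have hsl_pow : s ^ α * l ^ α ≤ 1 := by
        rw [← Real.mul_rpow hs.le hl.le]
        exact Real.rpow_le_one (by positivity) (by linarith) hα
      nlinarith [mul_nonneg hs.le (hp0 s), Real.rpow_nonneg hl.le α]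
    have hexp : Real.exp (-2) * (d * s) ≤ Real.exp (-(l * s)) - Real.exp (-((l + d) * s)) := by
      refine le_trans ?_ (exp_neg_mul_sub_le_exp_neg_sub_exp_neg _ _)
      rw [show (l + d) * s - l * s = d * s by ring]
      exact mul_le_mul_of_nonneg_right (Real.exp_le_exp.mpr (by nlinarith)) (by positivity)
    calc Real.exp (-2) * d * (κ * l ^ α) ≤ Real.exp (-2) * d * (s * p s) :=
          mul_le_mul_of_nonneg_left hsp (by positivity)
      _ = Real.exp (-2) * (d * s) * p s := by ring
      _ ≤ g s := by
          simp only [g, neg_mul]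
          exact mul_le_mul_of_nonneg_right hexp (hp0 s)
  calc Real.exp (-2) * κ * d * l ^ (α - 1)
        = ∫ _ in Set.Ioc 0 (1 / l), Real.exp (-2) * d * (κ * l ^ α) := by
        rw [setIntegral_const, Real.volume_real_Ioc_of_le (by positivity), smul_eq_mul,
          Real.rpow_sub_one hl.ne']
        ring
    _ ≤ ∫ s in Set.Ioc 0 (1 / l), g s :=
        setIntegral_mono_on (integrableOn_const (by simp)) (hg_int.mono_set hsub)
          measurableSet_Ioc hg_ge
    _ ≤ ∫ s in Set.Ioi 0, g s :=
        setIntegral_mono_set hg_int ((ae_restrict_mem measurableSet_Ioi).mono hg_nonneg)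
          hsub.eventuallyLE
    _ = laplaceExponent p (l + d) - laplaceExponent p l :=
        (laplaceExponent_sub hp0 hpmeas hmom hl.le (by linarith)).symm

end LaplaceExponent

theorem lamWF_succ (θ : ℝ) (k : ℕ) : lamWF θ (k + 1) = lamWF θ k + (k + θ / 2) := by
  unfold lamWF; push_cast; ring

theorem tendsto_lamWF_atTop {θ : ℝ} (hθ : 0 < θ) : Tendsto (lamWF θ) atTop atTop := by
  refine tendsto_atTop_mono' _ ?_ (tendsto_natCast_atTop_atTop.const_mul_atTop (half_pos hθ))
  filter_upwards [eventually_ge_atTop 1] with k hk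
  have hk' : (1:ℝ) ≤ k := by exact_mod_cast hk
  unfold lamWF
  nlinarith

theorem tendsto_mul_lamWF_rpow_atTop {θ α : ℝ} (hθ : 0 < θ) (hα : α ∈ Set.Ioo (1 / 2) 1) :
    Tendsto (fun k : ℕ => ((k : ℝ) + θ / 2) * lamWF θ k ^ (α - 1)) atTop atTop := by
  have hx : Tendsto (fun k : ℕ => ((k : ℝ) + θ / 2) ^ (2 * α - 1)) atTop atTop :=
    (tendsto_rpow_atTop (by linarith [hα.1])).comp
      (tendsto_atTop_add_const_right _ _ tendsto_natCast_atTop_atTop)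
  refine tendsto_atTop_mono' _ ?_ hx
  filter_upwards [eventually_ge_atTop 1] with k hk
  have hk' : (1:ℝ) ≤ k := by exact_mod_cast hk
  set x : ℝ := k + θ / 2 with hx_def
  have hx0 : 0 < x := by positivity
  have hlam0 : 0 < lamWF θ k := by unfold lamWF; nlinarith
  have hlam : lamWF θ k ≤ x ^ (2 : ℝ) := by
    rw [Real.rpow_two, hx_def]; unfold lamWF; nlinarith
  calc x ^ (2 * α - 1) = x * (x ^ (2 : ℝ)) ^ (α - 1) := by
        rw [← Real.rpow_mul hx0.le, ← Real.rpow_one_add' hx0.le (by linarith [hα.1])]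
        ring_nf
    _ ≤ x * lamWF θ k ^ (α - 1) :=
        mul_le_mul_of_nonneg_left
          (Real.rpow_le_rpow_of_nonpos hlam0 hlam (by linarith [hα.2])) hx0.le

theorem exists_forall_Ioo_le_of_tendsto_nhdsGT {f : ℝ → ℝ} {c κ : ℝ}
    (hf : Tendsto f (nhdsWithin 0 (Set.Ioi 0)) (nhds c)) (hκ : κ < c) :
    ∃ δ > 0, ∀ s ∈ Set.Ioo 0 δ, κ ≤ f s :=
  (nhdsGT_basis 0).eventually_iff.mp (hf.eventually (eventually_ge_nhds hκ))

theorem tendsto_laplaceExponent_lamWF_succ_sub {θ α c : ℝ} {p : ℝ → ℝ} (hθ : 0 < θ)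
    (hα : α ∈ Set.Ioo (1 / 2) 1) (hp0 : ∀ s, 0 ≤ p s) (hpmeas : Measurable p) (hc : 0 < c)
    (htail : Tendsto (fun s => p s * s ^ (1 + α)) (nhdsWithin 0 (Set.Ioi 0)) (nhds c))
    (hmom : IntegrableOn (fun s => s * p s) (Set.Ioi 0)) :
    Tendsto (fun k => laplaceExponent p (lamWF θ (k + 1)) - laplaceExponent p (lamWF θ k))
      atTop atTop := by
  obtain ⟨δ, hδ, hκ⟩ := exists_forall_Ioo_le_of_tendsto_nhdsGT htail (half_lt_self hc)
  refine tendsto_atTop_mono' _ ?_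
    ((tendsto_mul_lamWF_rpow_atTop hθ hα).const_mul_atTop
      (by positivity : 0 < Real.exp (-2) * (c / 2)))
  filter_upwards [eventually_ge_atTop 3, (tendsto_lamWF_atTop hθ).eventually_gt_atTop (1 / δ)]
    with k hk hkδ
  have hk' : (3:ℝ) ≤ k := by exact_mod_cast hk
  have hlam : 0 < lamWF θ k := by unfold lamWF; nlinarith
  have hdl : (k : ℝ) + θ / 2 ≤ lamWF θ k := by unfold lamWF; nlinarith
  have hlδ : 1 / lamWF θ k < δ := by
    rw [div_lt_iff₀ hlam]; rw [div_lt_iff₀ hδ] at hkδ; linarith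
  rw [lamWF_succ, ← mul_assoc]
  exact laplaceExponent_add_sub_ge hp0 hpmeas hmom (by linarith [hα.1]) hκ hlam
    (by positivity) hdl hlδ

/-- for a driftless subordinator exponent
`ψ(λ) = ∫_0^∞ (1 − e^{−λs}) p(s) ds` whose Lévy density behaves as
`p(s) ∼ c s^{−(1+α)}` near `0` for some `α ∈ (1/2,1)` and has a finite first
moment, the terms `b_k(m) = a_{k,m}^{(θ)} e^{−tψ(λ_k)}` are eventually
strictly decreasing in `k` and tend to `0`; in particular
`B_m = inf{i ≥ 0 : b_{i+m+1}(m) < b_{i+m}(m)}` is finite. -/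
theorem alternating_terms_eventually_decreasing_stable (θ : ℝ) (hθ : 0 < θ)
    (t : ℝ) (ht : 0 < t)
    (α : ℝ) (hα : α ∈ Set.Ioo (1 / 2 : ℝ) 1)
    (p : ℝ → ℝ) (hp0 : ∀ s, 0 ≤ p s) (hpmeas : Measurable p)
    (c : ℝ) (hc : 0 < c)
    (htail : Tendsto (fun s => p s * s ^ (1 + α))
      (nhdsWithin 0 (Set.Ioi 0)) (nhds c))
    (hmom : IntegrableOn (fun s => s * p s) (Set.Ioi (0 : ℝ)))
    (ψ : ℝ → ℝ)
    (hψ : ∀ l : ℝ, ψ l = ∫ s in Set.Ioi (0 : ℝ), (1 - Real.exp (-l * s)) * p s)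
    (b : ℕ → ℕ → ℝ)
    (hb : ∀ k m : ℕ, b k m = acoef θ k m * Real.exp (-t * ψ (lamWF θ k))) :
    ∀ m : ℕ,
      (∃ N : ℕ, StrictAntiOn (fun k => b k m) (Set.Ici N))
      ∧ Tendsto (fun k => b k m) atTop (nhds 0)
      ∧ {i : ℕ | b (i + m + 1) m < b (i + m) m}.Nonempty := by
  intro m
  obtain rfl : ψ = laplaceExponent p := funext hψ
  have hratio := (Real.tendsto_exp_neg_atTop_nhds_zero.comp
    ((tendsto_laplaceExponent_lamWF_succ_sub hθ hα hp0 hpmeas hc htail hmom).const_mul_atTop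
      ht)).const_mul 4
  rw [mul_zero] at hratio
  have hpos : ∀ᶠ k in atTop, 0 < b k m := by
    filter_upwards [eventually_ge_atTop 1] with k hk
    rw [hb]
    exact mul_pos (acoef_pos hθ hk m) (Real.exp_pos _)
  have hstep : ∀ᶠ k in atTop, b (k + 1) m ≤ 4 * Real.exp (-(t * (laplaceExponent p
      (lamWF θ (k + 1)) - laplaceExponent p (lamWF θ k)))) * b k m := by
    filter_upwards [tendsto_natCast_atTop_atTop.eventually_ge_atTop (3 * (m : ℝ) + θ + 3)]
      with k hk
    rw [hb, hb]
    exact acoef_mul_exp_succ_le hθ (fun k => laplaceExponent p (lamWF θ k)) hk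
  obtain ⟨⟨N, hanti⟩, hlim⟩ := strictAntiOn_Ici_and_tendsto_zero_of_ratio hratio hpos hstep
  exact ⟨⟨N, hanti⟩, hlim, N,
    hanti (Set.mem_Ici.mpr (Nat.le_add_right N m)) (Set.mem_Ici.mpr (by omega))
      (Nat.lt_succ_self _)⟩
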